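/- arXiv:2505.04774 — 2 statements merged into one kernel-verified Lean document; each statement's English description precedes it below -/
import Mathlib

section
/- Let v : ℝ → ℝ be measurable and β > 0, r ∈ (0,1). Then ∫_{|x|<r} ( ∫_0^x |v'(t)| dt )² |x|^{-2β} dx ≤ C ∫_{|x|<r} |v'(x)|² |x|^{-2β+2} dx, where C is a constant independent of β ≥ 1, r, and v. -/
open MeasureTheory Real Set
open scoped ENNReal

set_option maxHeartbeats 1000000

lemma hardy_stepA (g : ℝ → ℝ) (β : ℝ) (hg : Measurable g) {x : ℝ} (hx0 : 0 < x) :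
    ENNReal.ofReal ((∫ t in (0:ℝ)..x, |g t|) ^ 2 * |x| ^ (-2*β))
      ≤ (∫⁻ t in Set.Ioc 0 x, ENNReal.ofReal (g t ^ 2 * t ^ ((1:ℝ)/2)))
          * ENNReal.ofReal (2 * x ^ (1/2 + -2*β)) := by
  set a := ∫ t in (0:ℝ)..x, |g t| with ha
  have ha0 : 0 ≤ a := intervalIntegral.integral_nonneg hx0.le (fun t _ => abs_nonneg _)
  set B := ∫⁻ t in Set.Ioc 0 x, ENNReal.ofReal (g t ^ 2 * t ^ ((1:ℝ)/2)) with hB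
  -- step 1 : ofReal a ≤ lintegral of |g|
  have key1 : ENNReal.ofReal a ≤ ∫⁻ t in Set.Ioc 0 x, ENNReal.ofReal |g t| := by
    rw [ha, intervalIntegral.integral_of_le hx0.le]
    by_cases hi : IntegrableOn (fun t => |g t|) (Set.Ioc 0 x) volume
    · rw [ofReal_integral_eq_lintegral_ofReal hi (Filter.Eventually.of_forall fun t => abs_nonneg _)]
    · rw [integral_undef hi]; simp
  -- Cauchy-Schwarz
  have CS : (∫⁻ t in Set.Ioc 0 x, ENNReal.ofReal |g t|)
      ≤ B ^ ((1:ℝ)/2) * (ENNReal.ofReal (2 * x ^ ((1:ℝ)/2))) ^ ((1:ℝ)/2) := by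
    set f1 : ℝ → ℝ≥0∞ := fun t => ENNReal.ofReal (|g t| * t ^ ((1:ℝ)/4)) with hf1
    set f2 : ℝ → ℝ≥0∞ := fun t => ENNReal.ofReal (t ^ (-(1:ℝ)/4)) with hf2
    have e1 : ∫⁻ t in Set.Ioc 0 x, ENNReal.ofReal |g t| = ∫⁻ t in Set.Ioc 0 x, f1 t * f2 t := by
      refine setLIntegral_congr_fun measurableSet_Ioc (fun t ht => ?_)
      show ENNReal.ofReal |g t| = ENNReal.ofReal (|g t| * t ^ ((1:ℝ)/4)) * ENNReal.ofReal (t ^ (-(1:ℝ)/4))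
      rw [← ENNReal.ofReal_mul (mul_nonneg (abs_nonneg _) (Real.rpow_nonneg ht.1.le _)),
        mul_assoc, ← Real.rpow_add ht.1]
      norm_num
    have hm1 : AEMeasurable f1 (volume.restrict (Set.Ioc 0 x)) := by
      apply Measurable.aemeasurable; measurability
    have hm2 : AEMeasurable f2 (volume.restrict (Set.Ioc 0 x)) := by
      apply Measurable.aemeasurable; measurability
    have hCS := ENNReal.lintegral_mul_le_Lp_mul_Lq (volume.restrict (Set.Ioc 0 x))
      (by rw [Real.holderConjugate_iff]; norm_num : (2:ℝ).HolderConjugate 2) hm1 hm2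
    rw [e1]
    have e2 : ∫⁻ t in Set.Ioc 0 x, f1 t ^ (2:ℝ) = B := by
      rw [hB]
      refine setLIntegral_congr_fun measurableSet_Ioc (fun t ht => ?_)
      show ENNReal.ofReal (|g t| * t ^ ((1:ℝ)/4)) ^ (2:ℝ) = ENNReal.ofReal (g t ^ 2 * t ^ ((1:ℝ)/2))
      rw [ENNReal.ofReal_rpow_of_nonneg (mul_nonneg (abs_nonneg _) (Real.rpow_nonneg ht.1.le _)) (by norm_num)]
      congr 1
      rw [show (2:ℝ) = ((2:ℕ):ℝ) by norm_num, Real.rpow_natCast]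
      rw [mul_pow, sq_abs, ← Real.rpow_natCast (t ^ ((1:ℝ)/4)) 2, ← Real.rpow_mul ht.1.le]
      norm_num
    have e3 : ∫⁻ t in Set.Ioc 0 x, f2 t ^ (2:ℝ) = ENNReal.ofReal (2 * x ^ ((1:ℝ)/2)) := by
      have e3' : ∫⁻ t in Set.Ioc 0 x, f2 t ^ (2:ℝ) = ∫⁻ t in Set.Ioc 0 x, ENNReal.ofReal (t ^ (-1/2 : ℝ)) := by
        refine setLIntegral_congr_fun measurableSet_Ioc (fun t ht => ?_)
        show ENNReal.ofReal (t ^ (-(1:ℝ)/4)) ^ (2:ℝ) = ENNReal.ofReal (t ^ (-1/2 : ℝ))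
        rw [ENNReal.ofReal_rpow_of_nonneg (Real.rpow_nonneg ht.1.le _) (by norm_num)]
        congr 1
        rw [show (2:ℝ) = ((2:ℕ):ℝ) by norm_num, Real.rpow_natCast,
          ← Real.rpow_natCast (t ^ (-(1:ℝ)/4)) 2, ← Real.rpow_mul ht.1.le]
        norm_num
      have hint : IntegrableOn (fun t : ℝ => t ^ (-1/2 : ℝ)) (Set.Ioc 0 x) volume :=
        (intervalIntegrable_iff_integrableOn_Ioc_of_le hx0.le).1
          (intervalIntegral.intervalIntegrable_rpow' (by norm_num))
      have hnn : 0 ≤ᵐ[volume.restrict (Set.Ioc 0 x)] fun t : ℝ => t ^ (-1/2 : ℝ) := by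
        refine (ae_restrict_iff' measurableSet_Ioc).2 (Filter.Eventually.of_forall fun t ht => ?_)
        exact Real.rpow_nonneg ht.1.le _
      rw [e3', ← ofReal_integral_eq_lintegral_ofReal hint hnn]
      congr 1
      rw [← intervalIntegral.integral_of_le hx0.le]
      rw [integral_rpow (Or.inl (by norm_num))]
      rw [Real.zero_rpow (by norm_num)]
      ring_nf
    calc ∫⁻ t in Set.Ioc 0 x, f1 t * f2 t
        ≤ (∫⁻ t in Set.Ioc 0 x, f1 t ^ (2:ℝ)) ^ ((1:ℝ)/2)
          * (∫⁻ t in Set.Ioc 0 x, f2 t ^ (2:ℝ)) ^ ((1:ℝ)/2) := by simpa using hCS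
      _ = B ^ ((1:ℝ)/2) * (ENNReal.ofReal (2 * x ^ ((1:ℝ)/2))) ^ ((1:ℝ)/2) := by rw [e2, e3]
  -- combine
  have habs : |x| = x := abs_of_pos hx0
  rw [habs, ENNReal.ofReal_mul (by positivity), ENNReal.ofReal_pow ha0]
  have step : (ENNReal.ofReal a) ^ 2 ≤ B * ENNReal.ofReal (2 * x ^ ((1:ℝ)/2)) := by
    calc (ENNReal.ofReal a) ^ 2
        ≤ (B ^ ((1:ℝ)/2) * (ENNReal.ofReal (2 * x ^ ((1:ℝ)/2))) ^ ((1:ℝ)/2)) ^ 2 :=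
          pow_le_pow_left₀ zero_le (key1.trans CS) 2
      _ = B * ENNReal.ofReal (2 * x ^ ((1:ℝ)/2)) := by
          rw [mul_pow, ← ENNReal.rpow_natCast (B ^ ((1:ℝ)/2)) 2, ← ENNReal.rpow_mul,
            ← ENNReal.rpow_natCast ((ENNReal.ofReal (2 * x ^ ((1:ℝ)/2))) ^ ((1:ℝ)/2)) 2,
            ← ENNReal.rpow_mul]
          norm_num
  calc (ENNReal.ofReal a) ^ 2 * ENNReal.ofReal (x ^ (-2*β))
      ≤ (B * ENNReal.ofReal (2 * x ^ ((1:ℝ)/2))) * ENNReal.ofReal (x ^ (-2*β)) :=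
        mul_le_mul_left step _
    _ = B * ENNReal.ofReal (2 * x ^ (1/2 + -2*β)) := by
        rw [mul_assoc, ← ENNReal.ofReal_mul (by positivity)]
        congr 2
        rw [mul_assoc, ← Real.rpow_add hx0]

lemma hardy_half (g : ℝ → ℝ) (β r : ℝ) (hg : Measurable g) (hβ : 1 ≤ β) (hr0 : 0 < r) :
    ∫⁻ x in Set.Ioo 0 r, ENNReal.ofReal ((∫ t in (0:ℝ)..x, |g t|) ^ 2 * |x| ^ (-2*β))
      ≤ ENNReal.ofReal 4 *
        ∫⁻ x in Set.Ioo 0 r, ENNReal.ofReal ((g x) ^ 2 * |x| ^ (-2*β+2)) := by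
  set h : ℝ → ℝ≥0∞ := fun t => ENNReal.ofReal (g t ^ 2 * t ^ ((1:ℝ)/2)) with hh
  set w : ℝ → ℝ≥0∞ := fun x => ENNReal.ofReal (2 * x ^ (1/2 + -2*β)) with hw
  have hhm : Measurable h := by measurability
  have hwm : Measurable w := by measurability
  set S : Set (ℝ × ℝ) := {p | 0 < p.2 ∧ p.2 ≤ p.1 ∧ p.1 < r} with hS
  have hSm : MeasurableSet S := by
    have : S = {p : ℝ × ℝ | 0 < p.2} ∩ ({p | p.2 ≤ p.1} ∩ {p | p.1 < r}) := by
      ext p; simp [hS, Set.mem_setOf_eq, and_assoc]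
    rw [this]
    exact (measurableSet_lt measurable_const measurable_snd).inter
      ((measurableSet_le measurable_snd measurable_fst).inter
        (measurableSet_lt measurable_fst measurable_const))
  set K : ℝ × ℝ → ℝ≥0∞ := S.indicator (fun p => h p.2 * w p.1) with hK
  have hKm : Measurable K := ((hhm.comp measurable_snd).mul (hwm.comp measurable_fst)).indicator hSm
  -- step 1: pointwise bound
  have step1 : ∫⁻ x in Set.Ioo 0 r, ENNReal.ofReal ((∫ t in (0:ℝ)..x, |g t|) ^ 2 * |x| ^ (-2*β))
      ≤ ∫⁻ x in Set.Ioo 0 r, (∫⁻ t in Set.Ioc 0 x, h t) * w x := by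
    refine lintegral_mono_ae ((ae_restrict_iff' measurableSet_Ioo).2
      (Filter.Eventually.of_forall fun x hx => ?_))
    exact hardy_stepA g β hg hx.1
  -- step 2: rewrite as double integral of K
  have step2 : ∫⁻ x in Set.Ioo 0 r, (∫⁻ t in Set.Ioc 0 x, h t) * w x
      = ∫⁻ x, ∫⁻ t, K (x, t) := by
    rw [← lintegral_indicator measurableSet_Ioo]
    congr 1; funext x
    by_cases hx : x ∈ Set.Ioo 0 r
    · rw [Set.indicator_of_mem hx]
      rw [← lintegral_mul_const' (w x) _ ENNReal.ofReal_ne_top]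
      rw [← lintegral_indicator measurableSet_Ioc]
      congr 1; funext t
      by_cases ht : t ∈ Set.Ioc 0 x
      · rw [Set.indicator_of_mem ht, hK,
          Set.indicator_of_mem (show (x, t) ∈ S from ⟨ht.1, ht.2, hx.2⟩)]
      · rw [Set.indicator_of_notMem ht, hK, Set.indicator_of_notMem]
        intro hmem; exact ht ⟨hmem.1, hmem.2.1⟩
    · rw [Set.indicator_of_notMem hx]
      have hz : ∀ t, K (x, t) = 0 := by
        intro t
        rw [hK]
        apply Set.indicator_of_notMem
        intro hmem
        exact hx ⟨lt_of_lt_of_le hmem.1 hmem.2.1, hmem.2.2⟩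
      simp [hz]
  -- step 3: swap
  have step3 : ∫⁻ x, ∫⁻ t, K (x, t) = ∫⁻ t, ∫⁻ x, K (x, t) := by
    exact lintegral_lintegral_swap hKm.aemeasurable
  -- step 4: bound inner integral
  have step4 : ∀ t : ℝ, (∫⁻ x, K (x, t))
      ≤ (Set.Ioo 0 r).indicator
          (fun t => ENNReal.ofReal 4 * ENNReal.ofReal (g t ^ 2 * |t| ^ (-2*β+2))) t := by
    intro t
    by_cases ht : t ∈ Set.Ioo 0 r
    · rw [Set.indicator_of_mem ht]
      have hKt : ∀ x, K (x, t) = (Set.Ico t r).indicator (fun x => h t * w x) x := by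
        intro x
        by_cases hx : x ∈ Set.Ico t r
        · rw [Set.indicator_of_mem hx, hK,
            Set.indicator_of_mem (show (x, t) ∈ S from ⟨ht.1, hx.1, hx.2⟩)]
        · rw [Set.indicator_of_notMem hx, hK, Set.indicator_of_notMem]
          intro hmem; exact hx ⟨hmem.2.1, hmem.2.2⟩
      simp only [hKt]
      rw [lintegral_indicator measurableSet_Ico, lintegral_const_mul' _ _ ENNReal.ofReal_ne_top]
      have key : ∫⁻ x in Set.Ico t r, w x ≤ ENNReal.ofReal (4 * t ^ (3/2 + -2*β)) := by
        rw [setLIntegral_congr (Ico_ae_eq_Ioc (μ := volume) (a := t) (b := r))]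
        have hcont : ContinuousOn (fun x : ℝ => 2 * x ^ (1/2 + -2*β)) (Set.Icc t r) := by
          intro y hy
          have hy0 : y ≠ 0 := ne_of_gt (lt_of_lt_of_le ht.1 hy.1)
          exact (continuousAt_const.mul
            (Real.continuousAt_rpow_const y _ (Or.inl hy0))).continuousWithinAt
        have hint : IntegrableOn (fun x : ℝ => 2 * x ^ (1/2 + -2*β)) (Set.Ioc t r) volume :=
          (hcont.integrableOn_Icc).mono_set Set.Ioc_subset_Icc_self
        have hnn : 0 ≤ᵐ[volume.restrict (Set.Ioc t r)] fun x : ℝ => 2 * x ^ (1/2 + -2*β) := by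
          refine (ae_restrict_iff' measurableSet_Ioc).2
            (Filter.Eventually.of_forall fun y hy => ?_)
          have : (0:ℝ) < y := lt_trans ht.1 hy.1
          positivity
        rw [hw, ← ofReal_integral_eq_lintegral_ofReal hint hnn]
        apply ENNReal.ofReal_le_ofReal
        rw [← intervalIntegral.integral_of_le ht.2.le]
        rw [intervalIntegral.integral_const_mul]
        rw [integral_rpow (Or.inr ⟨by intro hc; nlinarith, by
          rw [Set.uIcc_of_le ht.2.le]; intro hc; exact absurd hc.1 (not_le.2 ht.1)⟩)]
        have e1 : 1/2 + -2*β + 1 = 3/2 + -2*β := by ring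
        rw [e1]
        have hA : (0:ℝ) < t ^ (3/2 + -2*β) := Real.rpow_pos_of_pos ht.1 _
        have hB : (0:ℝ) < r ^ (3/2 + -2*β) := Real.rpow_pos_of_pos hr0 _
        have hs : (1:ℝ)/2 ≤ 2*β - 3/2 := by linarith
        have hd1 : (3/2 + -2*β) ≠ 0 := by intro hc; nlinarith
        have hd2 : (0:ℝ) < 2*β - 3/2 := by nlinarith
        have e2 : 2 * ((r ^ (3/2 + -2*β) - t ^ (3/2 + -2*β)) / (3/2 + -2*β))
            = 2 * (t ^ (3/2 + -2*β) - r ^ (3/2 + -2*β)) / (2*β - 3/2) := by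
          rw [show (3/2 + -2*β : ℝ) = -(2*β - 3/2) by ring] at *
          rw [div_neg]
          ring
        rw [e2, div_le_iff₀ hd2]
        nlinarith [hA, hB, hs]
      calc h t * ∫⁻ x in Set.Ico t r, w x
          ≤ h t * ENNReal.ofReal (4 * t ^ (3/2 + -2*β)) := mul_le_mul_right key _
        _ = ENNReal.ofReal 4 * ENNReal.ofReal (g t ^ 2 * |t| ^ (-2*β+2)) := by
            rw [hh, abs_of_pos ht.1,
              ← ENNReal.ofReal_mul (mul_nonneg (sq_nonneg _) (Real.rpow_nonneg ht.1.le _))]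
            rw [← ENNReal.ofReal_mul (by norm_num)]
            congr 1
            rw [show g t ^ 2 * t ^ ((1:ℝ)/2) * (4 * t ^ (3/2 + -2*β))
                = 4 * (g t ^ 2 * (t ^ ((1:ℝ)/2) * t ^ (3/2 + -2*β))) by ring,
              ← Real.rpow_add ht.1]
            ring_nf
    · rw [Set.indicator_of_notMem ht]
      have hz : ∀ x, K (x, t) = 0 := by
        intro x
        rw [hK]
        apply Set.indicator_of_notMem
        intro hmem
        exact ht ⟨hmem.1, lt_of_le_of_lt hmem.2.1 hmem.2.2⟩
      simp [hz]
  calc ∫⁻ x in Set.Ioo 0 r, ENNReal.ofReal ((∫ t in (0:ℝ)..x, |g t|) ^ 2 * |x| ^ (-2*β))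
      ≤ ∫⁻ x in Set.Ioo 0 r, (∫⁻ t in Set.Ioc 0 x, h t) * w x := step1
    _ = ∫⁻ t, ∫⁻ x, K (x, t) := by rw [step2, step3]
    _ ≤ ∫⁻ t, (Set.Ioo 0 r).indicator
          (fun t => ENNReal.ofReal 4 * ENNReal.ofReal (g t ^ 2 * |t| ^ (-2*β+2))) t :=
        lintegral_mono step4
    _ = ENNReal.ofReal 4 * ∫⁻ x in Set.Ioo 0 r, ENNReal.ofReal ((g x) ^ 2 * |x| ^ (-2*β+2)) := by
        rw [lintegral_indicator measurableSet_Ioo,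
          lintegral_const_mul' _ _ ENNReal.ofReal_ne_top]

lemma lint_neg_Ioo (f : ℝ → ℝ≥0∞) (r : ℝ) :
    ∫⁻ x in Set.Ioo (-r) 0, f x = ∫⁻ y in Set.Ioo 0 r, f (-y) := by
  rw [(Measure.measurePreserving_neg (volume : Measure ℝ)).setLIntegral_comp_emb
    (Homeomorph.neg ℝ).measurableEmbedding f (Set.Ioo 0 r)]
  congr 1
  simp

lemma hardy_neg_half (g : ℝ → ℝ) (β r : ℝ) (hg : Measurable g) (hβ : 1 ≤ β) (hr0 : 0 < r) :
    ∫⁻ x in Set.Ioo (-r) 0, ENNReal.ofReal ((∫ t in (0:ℝ)..x, |g t|) ^ 2 * |x| ^ (-2*β))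
      ≤ ENNReal.ofReal 4 *
        ∫⁻ x in Set.Ioo (-r) 0, ENNReal.ofReal ((g x) ^ 2 * |x| ^ (-2*β+2)) := by
  set g' : ℝ → ℝ := fun t => g (-t) with hg'def
  have hg' : Measurable g' := hg.comp measurable_neg
  have h1 : ∫⁻ x in Set.Ioo (-r) 0, ENNReal.ofReal ((∫ t in (0:ℝ)..x, |g t|) ^ 2 * |x| ^ (-2*β))
      = ∫⁻ y in Set.Ioo 0 r, ENNReal.ofReal ((∫ t in (0:ℝ)..y, |g' t|) ^ 2 * |y| ^ (-2*β)) := by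
    rw [lint_neg_Ioo]
    refine setLIntegral_congr_fun measurableSet_Ioo (fun y hy => ?_)
    congr 1
    have e : ∫ t in (0:ℝ)..y, |g' t| = -∫ t in (0:ℝ)..(-y), |g t| := by
      rw [hg'def]
      have := intervalIntegral.integral_comp_neg (a := (0:ℝ)) (b := y) (fun t => |g t|)
      simp only [neg_zero] at this
      rw [this, intervalIntegral.integral_symm]
    rw [e, abs_neg, neg_pow, neg_one_sq]
    ring_nf
  have h2 : ∫⁻ x in Set.Ioo (-r) 0, ENNReal.ofReal ((g x) ^ 2 * |x| ^ (-2*β+2))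
      = ∫⁻ y in Set.Ioo 0 r, ENNReal.ofReal ((g' y) ^ 2 * |y| ^ (-2*β+2)) := by
    rw [lint_neg_Ioo]
    refine setLIntegral_congr_fun measurableSet_Ioo (fun y hy => ?_)
    rw [hg'def, abs_neg]
  rw [h1, h2]
  exact hardy_half g' β r hg' hβ hr0

/-- Weighted Hardy inequality on `(-r, r)` with power weight `|x|^{-2β}`:
`∫_{|x|<r} (∫_0^x |v'|)² |x|^{-2β} dx ≤ C ∫_{|x|<r} |v'|² |x|^{-2β+2} dx`,
with `C` independent of `β ≥ 1`, `r ∈ (0,1)` and of the (measurable) function `v'`. -/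
theorem weighted_hardy_inequality :
    ∃ C > (0 : ℝ), ∀ (g : ℝ → ℝ) (β r : ℝ), Measurable g → 1 ≤ β → 0 < r → r < 1 →
      ∫⁻ x in Set.Ioo (-r) r,
          ENNReal.ofReal ((∫ t in (0 : ℝ)..x, |g t|) ^ 2 * |x| ^ (-2 * β))
        ≤ ENNReal.ofReal C *
          ∫⁻ x in Set.Ioo (-r) r,
            ENNReal.ofReal ((g x) ^ 2 * |x| ^ (-2 * β + 2)) := by
  refine ⟨4, by norm_num, fun g β r hg hβ hr0 hr1 => ?_⟩
  have hsplit : Set.Ioo (-r) r = Set.Ioo (-r) 0 ∪ Set.Ico 0 r :=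
    (Set.Ioo_union_Ico_eq_Ioo (by linarith) hr0.le).symm
  have hdisj : Disjoint (Set.Ioo (-r) (0:ℝ)) (Set.Ico 0 r) := by
    apply Set.disjoint_left.2
    rintro x ⟨_, h1⟩ ⟨h2, _⟩
    exact absurd h2 (not_le.2 h1)
  have hIco : ∀ f : ℝ → ℝ≥0∞, ∫⁻ x in Set.Ico (0:ℝ) r, f x = ∫⁻ x in Set.Ioo (0:ℝ) r, f x :=
    fun f => (setLIntegral_congr (Ioo_ae_eq_Ico (μ := volume) (a := (0:ℝ)) (b := r))).symm
  rw [hsplit, lintegral_union measurableSet_Ico hdisj, lintegral_union measurableSet_Ico hdisj,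
    hIco, hIco, mul_add]
  exact add_le_add (hardy_neg_half g β r hg hβ hr0) (hardy_half g β r hg hβ hr0)
end

section
/- (Hadamard three circles theorem) Let h be holomorphic on the disc B(0, r₂) and continuous on its closure, 0 < r₁ ≤ r ≤ r₂, with r = r₁^θ r₂^{1-θ} for θ ∈ [0,1]. Setting m(ρ) = sup_{|z| ≤ ρ} |h(z)|, one has m(r) ≤ m(r₁)^θ m(r₂)^{1-θ}. -/
open Metric Complex

/-- Hadamard three circles theorem: for `h` holomorphic on `B(0,r₂)` and
continuous on its closure, with `0 < r₁ ≤ r ≤ r₂` and `r = r₁^θ r₂^{1-θ}`,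
`θ ∈ [0,1]`, the maximum modulus `m(ρ) = sup_{|z| ≤ ρ} |h z|` satisfies
`m(r) ≤ m(r₁)^θ m(r₂)^{1-θ}`. -/
theorem hadamard_three_circles
    (h : ℂ → ℂ) (r r₁ r₂ θ : ℝ)
    (hr₁ : 0 < r₁) (h₁r : r₁ ≤ r) (hrr₂ : r ≤ r₂)
    (hθ : θ ∈ Set.Icc (0 : ℝ) 1)
    (hr : r = r₁ ^ θ * r₂ ^ (1 - θ))
    (hhol : DifferentiableOn ℂ h (ball (0 : ℂ) r₂))
    (hcont : ContinuousOn h (closedBall (0 : ℂ) r₂)) :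
    (⨆ z : closedBall (0 : ℂ) r, ‖h z‖)
      ≤ (⨆ z : closedBall (0 : ℂ) r₁, ‖h z‖) ^ θ *
        (⨆ z : closedBall (0 : ℂ) r₂, ‖h z‖) ^ (1 - θ) := by
  obtain ⟨hθ0, hθ1⟩ := hθ
  have hr₂ : (0:ℝ) < r₂ := hr₁.trans_le (h₁r.trans hrr₂)
  have hr0 : (0:ℝ) < r := hr₁.trans_le h₁r
  have hbdd : ∀ ρ : ℝ, ρ ≤ r₂ →
      BddAbove (Set.range fun z : closedBall (0:ℂ) ρ => ‖h z‖) := by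
    intro ρ hρ
    have hsub : closedBall (0:ℂ) ρ ⊆ closedBall 0 r₂ := closedBall_subset_closedBall hρ
    have hc : ContinuousOn (fun z => ‖h z‖) (closedBall (0:ℂ) ρ) := (hcont.mono hsub).norm
    obtain ⟨C, hC⟩ := ((isCompact_closedBall (0:ℂ) ρ).image_of_continuousOn hc).bddAbove
    exact ⟨C, by rintro x ⟨z, rfl⟩; exact hC ⟨z, z.2, rfl⟩⟩
  rcases eq_or_lt_of_le (h₁r.trans hrr₂) with heq | hlt
  · -- degenerate case r₁ = r₂, hence r = r₁ = r₂
    have hrr : r = r₁ := le_antisymm (heq ▸ hrr₂) h₁r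
    subst hrr
    subst heq
    set m := ⨆ z : closedBall (0:ℂ) r, ‖h z‖ with hm
    have hm0 : 0 ≤ m := by
      have h0mem : (0:ℂ) ∈ closedBall (0:ℂ) r := by simp [hr0.le]
      exact (norm_nonneg _).trans (le_ciSup (hbdd r le_rfl) ⟨0, h0mem⟩)
    rcases eq_or_lt_of_le hm0 with hm' | hm'
    · rw [← hm']
      positivity
    · rw [← Real.rpow_add hm']
      simp
  · -- main case r₁ < r₂
    set A := ⨆ z : closedBall (0:ℂ) r₁, ‖h z‖ with hA
    set B := ⨆ z : closedBall (0:ℂ) r₂, ‖h z‖ with hB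
    have hA_le : ∀ w : ℂ, w ∈ closedBall (0:ℂ) r₁ → ‖h w‖ ≤ A :=
      fun w hw => le_ciSup (hbdd r₁ (h₁r.trans hrr₂)) ⟨w, hw⟩
    have hB_le : ∀ w : ℂ, w ∈ closedBall (0:ℂ) r₂ → ‖h w‖ ≤ B :=
      fun w hw => le_ciSup (hbdd r₂ le_rfl) ⟨w, hw⟩
    set φ : ℂ → ℂ := fun z =>
      Complex.exp ((1 - z) * (Real.log r₂ : ℂ) + z * (Real.log r₁ : ℂ)) with hφdef
    have hφ : ∀ z : ℂ, ‖φ z‖ = r₂ ^ (1 - z.re) * r₁ ^ z.re := by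
      intro z
      rw [hφdef]
      simp only [Complex.norm_exp]
      rw [Real.rpow_def_of_pos hr₂, Real.rpow_def_of_pos hr₁, ← Real.exp_add]
      congr 1
      simp [Complex.add_re, Complex.mul_re, Complex.ofReal_re, Complex.ofReal_im]
      ring
    have hφ_diff : Differentiable ℂ φ := by
      apply Complex.differentiable_exp.comp
      fun_prop
    have hφ_mem : ∀ z : ℂ, z.re ∈ Set.Icc (0:ℝ) 1 → ‖φ z‖ ≤ r₂ := by
      intro z hz
      rw [hφ]
      calc r₂ ^ (1 - z.re) * r₁ ^ z.re ≤ r₂ ^ (1 - z.re) * r₂ ^ z.re :=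
            mul_le_mul_of_nonneg_left (Real.rpow_le_rpow hr₁.le hlt.le hz.1)
              (Real.rpow_nonneg hr₂.le _)
        _ = r₂ := by rw [← Real.rpow_add hr₂]; simp
    have hφ_lt : ∀ z : ℂ, z.re ∈ Set.Ioo (0:ℝ) 1 → ‖φ z‖ < r₂ := by
      intro z hz
      rw [hφ]
      calc r₂ ^ (1 - z.re) * r₁ ^ z.re < r₂ ^ (1 - z.re) * r₂ ^ z.re := by
            have := Real.rpow_lt_rpow hr₁.le hlt hz.1
            exact mul_lt_mul_of_pos_left this (Real.rpow_pos_of_pos hr₂ _)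
        _ = r₂ := by rw [← Real.rpow_add hr₂]; simp
    have hφθ : ‖φ (θ:ℂ)‖ = r := by
      rw [hφ]
      simp only [Complex.ofReal_re]
      rw [hr]; ring
    have key : ∀ w : ℂ, ‖w‖ = r → ‖h w‖ ≤ A ^ θ * B ^ (1 - θ) := by
      intro w hw
      have hφθ0 : φ (θ:ℂ) ≠ 0 := Complex.exp_ne_zero _
      set u : ℂ := w / φ (θ:ℂ) with hu
      have hu1 : ‖u‖ = 1 := by
        rw [hu, norm_div, hw, hφθ, div_self hr0.ne']
      have hnorm : ∀ z : ℂ, ‖u * φ z‖ = ‖φ z‖ := by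
        intro z; rw [norm_mul, hu1, one_mul]
      set g : ℂ → ℂ := fun z => h (u * φ z) with hg
      have hclo : closure (HadamardThreeLines.verticalStrip 0 1)
          = HadamardThreeLines.verticalClosedStrip 0 1 := by
        rw [HadamardThreeLines.verticalStrip, HadamardThreeLines.verticalClosedStrip,
          ← closure_Ioo zero_ne_one, ← closure_preimage_re]
      have hd : DiffContOnCl ℂ g (HadamardThreeLines.verticalStrip 0 1) := by
        constructor
        · apply DifferentiableOn.comp hhol
            ((differentiable_const u |>.mul hφ_diff).differentiableOn)
          intro z hz
          rw [mem_ball_zero_iff]; show ‖u * φ z‖ < r₂; rw [hnorm]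
          exact hφ_lt z hz
        · rw [hclo]
          apply ContinuousOn.comp hcont
            ((continuous_const.mul hφ_diff.continuous).continuousOn)
          intro z hz
          show u * φ z ∈ closedBall (0:ℂ) r₂
          rw [mem_closedBall_zero_iff, hnorm]
          exact hφ_mem z hz
      have hBdd : BddAbove ((norm ∘ g) '' HadamardThreeLines.verticalClosedStrip 0 1) := by
        refine ⟨B, ?_⟩
        rintro x ⟨z, hz, rfl⟩
        refine hB_le _ ?_
        rw [mem_closedBall_zero_iff, hnorm]
        exact hφ_mem z hz
      have ha : ∀ z ∈ Complex.re ⁻¹' {(0:ℝ)}, ‖g z‖ ≤ B := by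
        intro z hz
        refine hB_le _ ?_
        rw [mem_closedBall_zero_iff, hnorm]
        exact hφ_mem z (by simp [Set.mem_preimage, Set.mem_singleton_iff] at hz; simp [hz])
      have hb : ∀ z ∈ Complex.re ⁻¹' {(1:ℝ)}, ‖g z‖ ≤ A := by
        intro z hz
        simp only [Set.mem_preimage, Set.mem_singleton_iff] at hz
        refine hA_le _ ?_
        rw [mem_closedBall_zero_iff, hnorm, hφ, hz]
        simp
      have hmem : (θ:ℂ) ∈ HadamardThreeLines.verticalClosedStrip 0 1 := by
        simp [HadamardThreeLines.verticalClosedStrip, Set.mem_preimage, hθ0, hθ1]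
      have := Complex.HadamardThreeLines.norm_le_interp_of_mem_verticalClosedStrip₀₁'
        g hmem hd hBdd ha hb
      rw [show g (θ:ℂ) = h w by rw [hg]; simp only [hu, div_mul_cancel₀ _ hφθ0]] at this
      simpa only [Complex.ofReal_re, mul_comm] using this
    have key2 : ∀ w : ℂ, w ∈ closedBall (0:ℂ) r → ‖h w‖ ≤ A ^ θ * B ^ (1 - θ) := by
      intro w hw
      have hdc : DiffContOnCl ℂ h (ball (0:ℂ) r) :=
        ⟨hhol.mono (ball_subset_ball hrr₂),
         hcont.mono (by rw [closure_ball (0:ℂ) hr0.ne']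
                        exact closedBall_subset_closedBall hrr₂)⟩
      refine norm_le_of_forall_mem_frontier_norm_le isBounded_ball hdc ?_ ?_
      · intro z hz
        rw [frontier_ball (0:ℂ) hr0.ne'] at hz
        exact key z (mem_sphere_zero_iff_norm.mp hz)
      · rwa [closure_ball (0:ℂ) hr0.ne']
    have : Nonempty (closedBall (0:ℂ) r) :=
      Set.Nonempty.to_subtype (nonempty_closedBall.mpr hr0.le)
    exact ciSup_le fun z => key2 z z.2
end
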